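/- arXiv:2203.12520 — 4 statements merged into one kernel-verified Lean document; each statement's English description precedes it below -/
import Mathlib

section
/- Let n ≥ 1 and fix x ∈ ℝⁿ. Let F : ℝⁿ → ℝⁿ and ψ : ℝⁿ → ℝ both be differentiable at x. Let y : ℝ → ℝⁿ satisfy y(0) = x and have derivative −F(x) at t = 0 (y(t) represents the backward flow s(−t,x)), and let J : ℝ → L(ℝⁿ, ℝⁿ) be a map into continuous linear endomorphisms of ℝⁿ with J(0) = id that is differentiable at t = 0 with derivative −DF(x) (J(t) represents the Jacobian D_x s(−t,x), which satisfies the variational equation of the flow). Then the function t ↦ ψ(y(t))·det(J(t)) has derivative at t = 0 equal to −trace(D(ψ·F)(x)), where ψ·F : ℝⁿ → ℝⁿ is the vector field z ↦ ψ(z)·F(z) and D denotes the Fréchet derivative. That is, the infinitesimal generator of the Perron–Frobenius semigroup [P_t ψ](x) = ψ(s(−t,x))·det(D_x s(−t,x)) is P_F ψ = −∇·(Fψ). -/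
/-!
Differentiate the product at `t = 0`, where `y 0 = x` and `J 0 = id`. The chain rule gives
`(ψ ∘ y)'(0) = -Dψ(x) F(x)`, and Jacobi's formula at the identity (`det' = trace`, since only the
diagonal term of the Leibniz expansion has a nonzero derivative there) gives
`(det ∘ J)'(0) = -∇·F(x)`. Their sum `-(Dψ(x) F(x) + ψ(x) ∇·F(x))` is `-∇·(ψF)(x)` by the product
rule for the divergence.
-/

open Finset

variable {𝕜 : Type*} [NontriviallyNormedField 𝕜]

theorem Matrix.hasDerivAt_det_of_eq_one {ι : Type*} [Fintype ι] [DecidableEq ι]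
    {M : 𝕜 → Matrix ι ι 𝕜} {A : Matrix ι ι 𝕜} {t₀ : 𝕜}
    (hM₀ : M t₀ = 1) (hM : ∀ i j, HasDerivAt (fun t => M t i j) (A i j) t₀) :
    HasDerivAt (fun t => (M t).det) A.trace t₀ := by
  simp_rw [Matrix.det_apply']
  have hterm (σ : Equiv.Perm ι) : HasDerivAt (fun t => (σ.sign : 𝕜) * ∏ i, M t (σ i) i)
      ((σ.sign : 𝕜) * ∑ i, (∏ j ∈ univ.erase i, M t₀ (σ j) j) • A (σ i) i) t₀ :=
    (HasDerivAt.fun_finsetProd fun i _ => hM (σ i) i).const_mul _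
  refine (HasDerivAt.fun_sum fun σ _ => hterm σ).congr_deriv ?_
  rw [sum_eq_single (1 : Equiv.Perm ι) ?_ (by simp)]
  · simp [hM₀, Matrix.trace]
  intro σ _ hσ
  -- `σ ≠ 1` moves at least two points, so each product over `j ≠ i` meets a zero entry of `M t₀ = 1`.
  suffices ∀ i, ∏ j ∈ univ.erase i, M t₀ (σ j) j = 0 by simp [this]
  intro i
  obtain ⟨j, hj, hji⟩ := exists_mem_ne (σ.two_le_card_support_of_ne_one hσ) i
  exact prod_eq_zero (mem_erase.2 ⟨hji, mem_univ j⟩)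
    (by simpa [hM₀, Matrix.one_apply] using Equiv.Perm.mem_support.1 hj)

variable {E : Type*} [NormedAddCommGroup E] [NormedSpace 𝕜 E] [FiniteDimensional 𝕜 E]

theorem ContinuousLinearMap.hasDerivAt_det_of_eq_id [CompleteSpace 𝕜]
    {J : 𝕜 → E →L[𝕜] E} {A : E →L[𝕜] E} {t₀ : 𝕜}
    (hJ₀ : J t₀ = .id 𝕜 E) (hJ : HasDerivAt J A t₀) :
    HasDerivAt (fun t => (J t).det) (LinearMap.trace 𝕜 E A) t₀ := by
  let b := Module.finBasis 𝕜 E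
  let entry (i j) : (E →L[𝕜] E) →L[𝕜] 𝕜 :=
    LinearMap.toContinuousLinearMap (b.coord i) ∘L ContinuousLinearMap.apply 𝕜 E (b j)
  have hentry (T : E →L[𝕜] E) i j : entry i j T = LinearMap.toMatrix b b T i j := by
    simp [entry, LinearMap.toMatrix_apply]
  have hM (i j) : HasDerivAt (fun t => LinearMap.toMatrix b b (J t) i j)
      (LinearMap.toMatrix b b A i j) t₀ := by
    simpa only [Function.comp_def, hentry] using (entry i j).hasFDerivAt.comp_hasDerivAt t₀ hJ
  have hM₀ : LinearMap.toMatrix b b (J t₀) = 1 := by simp [hJ₀]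
  simpa only [LinearMap.det_toMatrix, LinearMap.trace_eq_matrix_trace 𝕜 b]
    using Matrix.hasDerivAt_det_of_eq_one hM₀ hM

noncomputable def divergence (G : E → E) (x : E) : 𝕜 :=
  LinearMap.trace 𝕜 E (fderiv 𝕜 G x)

theorem divergence_smul {ψ : E → 𝕜} {F : E → E} {x : E}
    (hψ : DifferentiableAt 𝕜 ψ x) (hF : DifferentiableAt 𝕜 F x) :
    divergence (fun z => ψ z • F z) x = ψ x * divergence F x + fderiv 𝕜 ψ x (F x) := by
  rw [divergence, (hψ.hasFDerivAt.fun_smul hF.hasFDerivAt).fderiv]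
  simp [divergence]

theorem perron_frobenius_generator_general
    (n : ℕ)
    (x : EuclideanSpace ℝ (Fin n))
    (F : EuclideanSpace ℝ (Fin n) → EuclideanSpace ℝ (Fin n))
    (ψ : EuclideanSpace ℝ (Fin n) → ℝ)
    (hF : DifferentiableAt ℝ F x)
    (hψ : DifferentiableAt ℝ ψ x)
    (y : ℝ → EuclideanSpace ℝ (Fin n))
    (hy0 : y 0 = x)
    (hy : HasDerivAt y (-F x) 0)
    (J : ℝ → (EuclideanSpace ℝ (Fin n) →L[ℝ] EuclideanSpace ℝ (Fin n)))
    (hJ0 : J 0 = ContinuousLinearMap.id ℝ (EuclideanSpace ℝ (Fin n)))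
    (hJ : HasDerivAt J (-fderiv ℝ F x) 0) :
    HasDerivAt (fun t : ℝ => ψ (y t) * (J t).det)
      (-(LinearMap.trace ℝ (EuclideanSpace ℝ (Fin n))
          (fderiv ℝ (fun z => ψ z • F z) x).toLinearMap)) 0 := by
  have hψy : HasDerivAt (fun t => ψ (y t)) (fderiv ℝ ψ x (-F x)) 0 :=
    hψ.hasFDerivAt.comp_hasDerivAt_of_eq 0 hy hy0.symm
  have hdetJ := ContinuousLinearMap.hasDerivAt_det_of_eq_id hJ0 hJ
  refine (hψy.mul hdetJ).congr_deriv ?_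
  change _ = -divergence (fun z => ψ z • F z) x
  rw [divergence_smul hψ hF, divergence, hy0, hJ0]
  simp only [map_neg, ContinuousLinearMap.det, ContinuousLinearMap.coe_id, LinearMap.det_id,
    ContinuousLinearMap.toLinearMap_neg]
  ring

/-- The infinitesimal generator of the Perron–Frobenius semigroup
`[P_t ψ](x) = ψ(s(−t,x)) · det(D_x s(−t,x))` is `P_F ψ = −∇·(Fψ)`:
if `y(t)` represents the backward flow `s(−t,x)` (so `y(0) = x`, `y'(0) = −F(x)`)
and `J(t)` represents the Jacobian `D_x s(−t,x)` (so `J(0) = id`, `J'(0) = −DF(x)`),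
then `t ↦ ψ(y(t)) · det(J(t))` has derivative `−trace(D(ψ·F)(x))` at `t = 0`. -/
theorem perron_frobenius_generator
    (n : ℕ) (hn : 1 ≤ n)
    (x : EuclideanSpace ℝ (Fin n))
    (F : EuclideanSpace ℝ (Fin n) → EuclideanSpace ℝ (Fin n))
    (ψ : EuclideanSpace ℝ (Fin n) → ℝ)
    (hF : DifferentiableAt ℝ F x)
    (hψ : DifferentiableAt ℝ ψ x)
    (y : ℝ → EuclideanSpace ℝ (Fin n))
    (hy0 : y 0 = x)
    (hy : HasDerivAt y (-F x) 0)
    (J : ℝ → (EuclideanSpace ℝ (Fin n) →L[ℝ] EuclideanSpace ℝ (Fin n)))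
    (hJ0 : J 0 = ContinuousLinearMap.id ℝ (EuclideanSpace ℝ (Fin n)))
    (hJ : HasDerivAt J (-fderiv ℝ F x) 0) :
    HasDerivAt (fun t : ℝ => ψ (y t) * (J t).det)
      (-(LinearMap.trace ℝ (EuclideanSpace ℝ (Fin n))
          (fderiv ℝ (fun z => ψ z • F z) x).toLinearMap)) 0 :=
  perron_frobenius_generator_general n x F ψ hF hψ y hy0 hy J hJ0 hJ
end

section
/- Let n ≥ 1 and let s : ℝ × ℝⁿ → ℝⁿ be jointly measurable, such that for each t ≥ 0 the time-t map s(t,·) : ℝⁿ → ℝⁿ is a bijection whose inverse is s(−t,·) and s(−t,·) is differentiable everywhere. Let p, h₀ : ℝⁿ → [0,∞] be measurable, and assume the map (t,x) ↦ h₀(s(−t,x))·|det D_x s(−t,x)| is measurable on [0,∞) × ℝⁿ. Define the occupation density ρ(x) = ∫₀^∞ h₀(s(−t,x))·|det D_x s(−t,x)| dt. Then ∫₀^∞ ∫_{ℝⁿ} p(s(t,x))·h₀(x) dλ(x) dt = ∫_{ℝⁿ} p(x)·ρ(x) dλ(x), as an equality in [0,∞]. -/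
/-!
For each fixed `t ≥ 0` the substitution `x = s(−t, y)` turns `∫ p(s(t,x)) h₀(x) dx` into
`∫ p(y) [P_t h₀](y) dy`; Tonelli's theorem then exchanges the time and space integrals, and
pulling `p(y)` out of the time integral leaves `∫ p(y) ρ(y) dy`.
-/

open MeasureTheory ENNReal Function

section ChangeOfVariables

variable {E : Type*} [NormedAddCommGroup E] [NormedSpace ℝ E] [FiniteDimensional ℝ E]
  [MeasurableSpace E] [BorelSpace E] (μ : Measure E) [μ.IsAddHaarMeasure]

theorem lintegral_eq_lintegral_abs_det_fderiv_mul_of_bijective {f : E → E}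
    (hf : Differentiable ℝ f) (hbij : Bijective f) (g : E → ℝ≥0∞) :
    ∫⁻ x, g x ∂μ = ∫⁻ x, ENNReal.ofReal |(fderiv ℝ f x).det| * g (f x) ∂μ := by
  have h := lintegral_image_eq_lintegral_abs_det_fderiv_mul μ MeasurableSet.univ
    (fun x _ => (hf x).hasFDerivAt.hasFDerivWithinAt) hbij.injective.injOn g
  rwa [Set.image_univ, hbij.surjective.range_eq, Measure.restrict_univ] at h

/-- The Perron–Frobenius operator of the map whose inverse is `ψ`, applied to the density `h`. -/
noncomputable def perronFrobenius (ψ : E → E) (h : E → ℝ≥0∞) (y : E) : ℝ≥0∞ :=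
  h (ψ y) * ENNReal.ofReal |(fderiv ℝ ψ y).det|

theorem lintegral_comp_mul_eq_lintegral_mul_perronFrobenius {φ ψ : E → E}
    (hψ : Differentiable ℝ ψ) (hleft : LeftInverse ψ φ) (hright : RightInverse ψ φ)
    (g h : E → ℝ≥0∞) :
    ∫⁻ x, g (φ x) * h x ∂μ = ∫⁻ y, g y * perronFrobenius ψ h y ∂μ := by
  rw [lintegral_eq_lintegral_abs_det_fderiv_mul_of_bijective μ hψ
    ⟨hright.injective, hleft.surjective⟩]
  refine lintegral_congr fun y => ?_
  rw [perronFrobenius, hright y]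
  ring

end ChangeOfVariables

theorem lintegral_lintegral_mul_left_swap {α β : Type*} [MeasurableSpace α] [MeasurableSpace β]
    {μ : Measure α} {ν : Measure β} [SFinite μ] [SFinite ν] {p : β → ℝ≥0∞}
    {f : α → β → ℝ≥0∞} (hp : AEMeasurable p ν) (hf : AEMeasurable (uncurry f) (μ.prod ν)) :
    ∫⁻ x, ∫⁻ y, p y * f x y ∂ν ∂μ = ∫⁻ y, p y * ∫⁻ x, f x y ∂μ ∂ν := by
  rw [lintegral_lintegral_swap (hp.comp_snd.mul hf)]
  refine lintegral_congr_ae ?_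
  filter_upwards [hf.aestronglyMeasurable.prodMk_right] with y hy
  exact lintegral_const_mul'' (p y) hy.aemeasurable

theorem collision_prob_eq_occupation_integral_general
    (n : ℕ)
    (s : ℝ × EuclideanSpace ℝ (Fin n) → EuclideanSpace ℝ (Fin n))
    (hleft : ∀ t : ℝ, 0 ≤ t → ∀ x, s (-t, s (t, x)) = x)
    (hright : ∀ t : ℝ, 0 ≤ t → ∀ y, s (t, s (-t, y)) = y)
    (hdiff : ∀ t : ℝ, 0 ≤ t → Differentiable ℝ (fun y => s (-t, y)))
    (p h₀ : EuclideanSpace ℝ (Fin n) → ℝ≥0∞)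
    (hp : Measurable p)
    (Pth : ℝ → EuclideanSpace ℝ (Fin n) → ℝ≥0∞)
    (hPth : ∀ t x, Pth t x
      = h₀ (s (-t, x)) * ENNReal.ofReal |(fderiv ℝ (fun z => s (-t, z)) x).det|)
    (hPth_meas : AEMeasurable (fun q : ℝ × EuclideanSpace ℝ (Fin n) => Pth q.1 q.2)
      ((volume.restrict (Set.Ici (0 : ℝ))).prod volume))
    (ρ : EuclideanSpace ℝ (Fin n) → ℝ≥0∞)
    (hρ : ∀ x, ρ x = ∫⁻ t in Set.Ici (0 : ℝ), Pth t x) :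
    ∫⁻ t in Set.Ici (0 : ℝ), ∫⁻ x, p (s (t, x)) * h₀ x
      = ∫⁻ x, p x * ρ x := by
  have hPth_eq : ∀ t, Pth t = perronFrobenius (fun z => s (-t, z)) h₀ :=
    fun t => funext (hPth t)
  calc ∫⁻ t in Set.Ici (0 : ℝ), ∫⁻ x, p (s (t, x)) * h₀ x
      = ∫⁻ t in Set.Ici (0 : ℝ), ∫⁻ y, p y * Pth t y :=
        setLIntegral_congr_fun measurableSet_Ici fun t ht => by
          rw [hPth_eq]
          exact lintegral_comp_mul_eq_lintegral_mul_perronFrobenius volume (hdiff t ht)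
            (hleft t ht) (hright t ht) p h₀
    _ = ∫⁻ y, p y * ∫⁻ t in Set.Ici (0 : ℝ), Pth t y :=
        lintegral_lintegral_mul_left_swap hp.aemeasurable hPth_meas
    _ = ∫⁻ x, p x * ρ x := by simp_rw [hρ]

/-- The collision probability equals the integral of `p` against the occupation
density: `∫₀^∞ ∫ p(s(t,x)) h₀(x) dλ(x) dt = ∫ p(x) ρ(x) dλ(x)`, where
`ρ(x) = ∫₀^∞ [P_t h₀](x) dt` and `[P_t h₀](x) = h₀(s(−t,x)) |det D_x s(−t,x)|`. -/
theorem collision_prob_eq_occupation_integral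
    (n : ℕ) (hn : 1 ≤ n)
    (s : ℝ × EuclideanSpace ℝ (Fin n) → EuclideanSpace ℝ (Fin n))
    (hs : Measurable s)
    (hleft : ∀ t : ℝ, 0 ≤ t → ∀ x, s (-t, s (t, x)) = x)
    (hright : ∀ t : ℝ, 0 ≤ t → ∀ y, s (t, s (-t, y)) = y)
    (hdiff : ∀ t : ℝ, 0 ≤ t → Differentiable ℝ (fun y => s (-t, y)))
    (p h₀ : EuclideanSpace ℝ (Fin n) → ℝ≥0∞)
    (hp : Measurable p) (hh₀ : Measurable h₀)
    (Pth : ℝ → EuclideanSpace ℝ (Fin n) → ℝ≥0∞)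
    (hPth : ∀ t x, Pth t x
      = h₀ (s (-t, x)) * ENNReal.ofReal |(fderiv ℝ (fun z => s (-t, z)) x).det|)
    (hPth_meas : AEMeasurable (fun q : ℝ × EuclideanSpace ℝ (Fin n) => Pth q.1 q.2)
      ((volume.restrict (Set.Ici (0 : ℝ))).prod volume))
    (ρ : EuclideanSpace ℝ (Fin n) → ℝ≥0∞)
    (hρ : ∀ x, ρ x = ∫⁻ t in Set.Ici (0 : ℝ), Pth t x) :
    ∫⁻ t in Set.Ici (0 : ℝ), ∫⁻ x, p (s (t, x)) * h₀ x
      = ∫⁻ x, p x * ρ x :=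
  collision_prob_eq_occupation_integral_general n s hleft hright hdiff p h₀ hp Pth hPth hPth_meas ρ
    hρ
end

section
/- Let n ≥ 1 and let s : ℝ × ℝⁿ → ℝⁿ be jointly measurable, such that for each t ≥ 0 the time-t map s(t,·) : ℝⁿ → ℝⁿ is a bijection whose inverse is s(−t,·) and s(−t,·) is differentiable everywhere. Let h₀ : ℝⁿ → [0,∞] be measurable, let μ₀ be the measure on ℝⁿ with density h₀ with respect to λ, and let X₁ ⊆ ℝⁿ be measurable. Assume (t,x) ↦ [P_t h₀](x) := h₀(s(−t,x))·|det D_x s(−t,x)| is measurable on [0,∞) × ℝⁿ and that the occupation density ρ(x) := ∫₀^∞ [P_t h₀](x) dt satisfies ∫_{X₁} ρ dλ < ∞. Then for every ε > 0 there exists T ≥ 0 such that for every measurable set B ⊆ X₁, ∫_T^∞ μ₀({x ∈ X₁ : s(t,x) ∈ B}) dt < ε; i.e., the system is almost-everywhere uniformly stable with respect to the initial measure μ₀. -/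
open MeasureTheory ENNReal Filter Set Topology

/-!
Change variables along the inverse flow `y = s(t, x)`: the `μ₀`-mass of the points of `X₁` that
sit in `B ⊆ X₁` at time `t` is `∫_B P_t h₀ dλ ≤ ∫_{X₁} P_t h₀ dλ`, uniformly in `B`. By Tonelli the
integral of this bound over `t ∈ [0, ∞)` is `∫_{X₁} ρ dλ < ∞`, so its tails over `[T, ∞)` tend
to zero.
-/

theorem withDensity_preimage_eq_setLIntegral_abs_det_mul {E : Type*} [NormedAddCommGroup E]
    [NormedSpace ℝ E] [FiniteDimensional ℝ E] [MeasurableSpace E] [BorelSpace E]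
    (μ : Measure E) [μ.IsAddHaarMeasure] {φ ψ : E → E} (hψ : Differentiable ℝ ψ)
    (hψφ : Function.LeftInverse ψ φ) (hφψ : Function.LeftInverse φ ψ) {B : Set E}
    (hB : MeasurableSet B) (h : E → ℝ≥0∞) :
    μ.withDensity h (φ ⁻¹' B) = ∫⁻ y in B, ENNReal.ofReal |(fderiv ℝ ψ y).det| * h (ψ y) ∂μ := by
  rw [withDensity_apply', ← image_eq_preimage_of_inverse hφψ hψφ,
    lintegral_image_eq_lintegral_abs_det_fderiv_mul μ hB
      (fun y _ => (hψ y).hasFDerivAt.hasFDerivWithinAt) hφψ.injective.injOn]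

theorem tendsto_setLIntegral_Ici_atTop_zero {μ : Measure ℝ} {f : ℝ → ℝ≥0∞}
    (hf : ∫⁻ t, f t ∂μ ≠ ∞) : Tendsto (fun T => ∫⁻ t in Ici T, f t ∂μ) atTop (𝓝 0) := by
  have hfin : μ.withDensity f univ ≠ ∞ := by
    rwa [withDensity_apply _ MeasurableSet.univ, Measure.restrict_univ]
  have hν : Tendsto (μ.withDensity f ∘ Ici) atTop (𝓝 (μ.withDensity f (⋂ T, Ici T))) :=
    tendsto_measure_iInter_atTop (fun _ => measurableSet_Ici.nullMeasurableSet)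
      (fun _ _ hST => Ici_subset_Ici.mpr hST) ⟨0, ne_top_of_le_ne_top hfin (measure_mono
        (subset_univ _))⟩
  have hempty : ⋂ T : ℝ, Ici T = ∅ := iInter_eq_empty_iff.mpr fun x => ⟨x + 1, by simp⟩
  simpa [Function.comp_def, withDensity_apply _ measurableSet_Ici, hempty] using hν

theorem occupation_finite_implies_ae_uniform_stability_general
    (n : ℕ)
    (s : ℝ × EuclideanSpace ℝ (Fin n) → EuclideanSpace ℝ (Fin n))
    (hleft : ∀ t : ℝ, 0 ≤ t → ∀ x, s (-t, s (t, x)) = x)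
    (hright : ∀ t : ℝ, 0 ≤ t → ∀ y, s (t, s (-t, y)) = y)
    (hdiff : ∀ t : ℝ, 0 ≤ t → Differentiable ℝ (fun y => s (-t, y)))
    (h₀ : EuclideanSpace ℝ (Fin n) → ℝ≥0∞)
    (μ₀ : Measure (EuclideanSpace ℝ (Fin n)))
    (hμ₀ : μ₀ = volume.withDensity h₀)
    (X₁ : Set (EuclideanSpace ℝ (Fin n)))
    (Pth : ℝ → EuclideanSpace ℝ (Fin n) → ℝ≥0∞)
    (hPth : ∀ t x, Pth t x
      = h₀ (s (-t, x)) * ENNReal.ofReal |(fderiv ℝ (fun z => s (-t, z)) x).det|)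
    (hPth_meas : AEMeasurable (fun q : ℝ × EuclideanSpace ℝ (Fin n) => Pth q.1 q.2)
      ((volume.restrict (Set.Ici (0 : ℝ))).prod volume))
    (ρ : EuclideanSpace ℝ (Fin n) → ℝ≥0∞)
    (hρ : ∀ x, ρ x = ∫⁻ t in Set.Ici (0 : ℝ), Pth t x)
    (hρ_fin : ∫⁻ x in X₁, ρ x < ⊤) :
    ∀ ε : ℝ≥0∞, 0 < ε → ∃ T : ℝ, 0 ≤ T ∧
      ∀ B : Set (EuclideanSpace ℝ (Fin n)), B ⊆ X₁ → MeasurableSet B →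
        ∫⁻ t in Set.Ici T, μ₀ {x ∈ X₁ | s (t, x) ∈ B} < ε := by
  intro ε hε
  have hbound : ∀ t : ℝ, 0 ≤ t → ∀ B, B ⊆ X₁ → MeasurableSet B →
      μ₀ {x ∈ X₁ | s (t, x) ∈ B} ≤ ∫⁻ y in X₁, Pth t y := fun t ht B hBX hB =>
    calc μ₀ {x ∈ X₁ | s (t, x) ∈ B}
        ≤ μ₀ ((fun x => s (t, x)) ⁻¹' B) := measure_mono fun _ hx => hx.2
      _ = ∫⁻ y in B, Pth t y := by
        rw [hμ₀, withDensity_preimage_eq_setLIntegral_abs_det_mul volume (hdiff t ht)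
          (hleft t ht) (hright t ht) hB]
        simp_rw [hPth, mul_comm]
      _ ≤ ∫⁻ y in X₁, Pth t y := lintegral_mono_set hBX
  have htotal : ∫⁻ t in Ici 0, ∫⁻ y in X₁, Pth t y = ∫⁻ x in X₁, ρ x := by
    simp_rw [hρ]
    exact lintegral_lintegral_swap (hPth_meas.mono_measure
      (Measure.prod_mono le_rfl Measure.restrict_le_self))
  obtain ⟨T, hT, hT0⟩ := (((tendsto_setLIntegral_Ici_atTop_zero (htotal ▸ hρ_fin.ne)).eventually
    (gt_mem_nhds hε)).and (eventually_ge_atTop 0)).exists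
  rw [Measure.restrict_restrict measurableSet_Ici, inter_eq_self_of_subset_left
    (Ici_subset_Ici.mpr hT0)] at hT
  exact ⟨T, hT0, fun B hBX hB => (setLIntegral_mono' measurableSet_Ici fun t ht =>
    hbound t (hT0.trans ht) B hBX hB).trans_lt hT⟩

/-- Finiteness of the occupation density over `X₁` implies almost-everywhere
uniform stability with respect to the initial measure `μ₀ = h₀ dλ`: for every
`ε > 0` there is `T ≥ 0` such that for every measurable `B ⊆ X₁`,
`∫_T^∞ μ₀({x ∈ X₁ : s(t,x) ∈ B}) dt < ε`. -/
theorem occupation_finite_implies_ae_uniform_stability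
    (n : ℕ) (hn : 1 ≤ n)
    (s : ℝ × EuclideanSpace ℝ (Fin n) → EuclideanSpace ℝ (Fin n))
    (hs : Measurable s)
    (hleft : ∀ t : ℝ, 0 ≤ t → ∀ x, s (-t, s (t, x)) = x)
    (hright : ∀ t : ℝ, 0 ≤ t → ∀ y, s (t, s (-t, y)) = y)
    (hdiff : ∀ t : ℝ, 0 ≤ t → Differentiable ℝ (fun y => s (-t, y)))
    (h₀ : EuclideanSpace ℝ (Fin n) → ℝ≥0∞)
    (hh₀ : Measurable h₀)
    (μ₀ : Measure (EuclideanSpace ℝ (Fin n)))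
    (hμ₀ : μ₀ = volume.withDensity h₀)
    (X₁ : Set (EuclideanSpace ℝ (Fin n)))
    (hX₁ : MeasurableSet X₁)
    (Pth : ℝ → EuclideanSpace ℝ (Fin n) → ℝ≥0∞)
    (hPth : ∀ t x, Pth t x
      = h₀ (s (-t, x)) * ENNReal.ofReal |(fderiv ℝ (fun z => s (-t, z)) x).det|)
    (hPth_meas : AEMeasurable (fun q : ℝ × EuclideanSpace ℝ (Fin n) => Pth q.1 q.2)
      ((volume.restrict (Set.Ici (0 : ℝ))).prod volume))
    (ρ : EuclideanSpace ℝ (Fin n) → ℝ≥0∞)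
    (hρ : ∀ x, ρ x = ∫⁻ t in Set.Ici (0 : ℝ), Pth t x)
    (hρ_fin : ∫⁻ x in X₁, ρ x < ⊤) :
    ∀ ε : ℝ≥0∞, 0 < ε → ∃ T : ℝ, 0 ≤ T ∧
      ∀ B : Set (EuclideanSpace ℝ (Fin n)), B ⊆ X₁ → MeasurableSet B →
        ∫⁻ t in Set.Ici T, μ₀ {x ∈ X₁ | s (t, x) ∈ B} < ε :=
  occupation_finite_implies_ae_uniform_stability_general n s hleft hright hdiff h₀ μ₀ hμ₀ X₁ Pth
    hPth hPth_meas ρ hρ hρ_fin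
end

section
/- Let n ≥ 1, let f, g : ℝⁿ → ℝⁿ, let ρ, ρ̄ : ℝⁿ → ℝ with ρ and ρ̄ differentiable everywhere and f, g differentiable everywhere, let h₀ : ℝⁿ → ℝ, and let M ≥ 0. Assume ρ(x) ≥ 0 and |ρ̄(x)| ≤ M·ρ(x) for every x, and assume the linear density constraint ∇·(ρ f + ρ̄ g)(x) = h₀(x) holds for every x, where ∇·G(x) := trace(DG(x)) for a differentiable vector field G. Define the feedback control k : ℝⁿ → ℝ by k(x) = ρ̄(x)/ρ(x) if ρ(x) ≠ 0 and k(x) = 0 otherwise. Then: (i) |k(x)| ≤ M for every x, so the control constraint |u| ≤ M is satisfied; and (ii) ρ(x)·(f(x) + k(x)·g(x)) = ρ(x)·f(x) + ρ̄(x)·g(x) for every x, and consequently the closed-loop vector field F := f + k·g satisfies ∇·(ρ F)(x) = h₀(x) for every x. -/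
/-!
The bound `|ρ̄| ≤ M ρ` forces `ρ̄ = 0` wherever `ρ = 0`, so `ρ k = ρ̄` everywhere. Hence `ρ F` and
`ρ f + ρ̄ g` are the same function and have the same divergence, and `|k| = |ρ̄| / |ρ| ≤ M`.
-/

open MeasureTheory

section FeedbackRecovery

variable {K : Type*} [Field K] [LinearOrder K] [IsStrictOrderedRing K] {a b M : K}

theorem abs_div_le_of_abs_le_mul (hM : 0 ≤ M) (h : |b| ≤ M * a) : |b / a| ≤ M := by
  rw [abs_div]
  exact div_le_of_le_mul₀ (abs_nonneg a) hM
    (h.trans (mul_le_mul_of_nonneg_left (le_abs_self a) hM))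

theorem mul_div_cancel_of_abs_le_mul (h : |b| ≤ M * a) : a * (b / a) = b := by
  rcases eq_or_ne a 0 with rfl | ha
  · simp_all
  · exact mul_div_cancel₀ b ha

end FeedbackRecovery

theorem control_synthesis_change_of_variables_general
    (n : ℕ)
    (f g : EuclideanSpace ℝ (Fin n) → EuclideanSpace ℝ (Fin n))
    (ρ ρb : EuclideanSpace ℝ (Fin n) → ℝ)
    (h₀ : EuclideanSpace ℝ (Fin n) → ℝ)
    (M : ℝ) (hM : 0 ≤ M)
    (hbound : ∀ x, |ρb x| ≤ M * ρ x)
    (hdiv : ∀ x, LinearMap.trace ℝ (EuclideanSpace ℝ (Fin n))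
        (fderiv ℝ (fun z => ρ z • f z + ρb z • g z) x).toLinearMap = h₀ x)
    (k : EuclideanSpace ℝ (Fin n) → ℝ)
    (hk : ∀ x, k x = if ρ x ≠ 0 then ρb x / ρ x else 0) :
    (∀ x, |k x| ≤ M)
    ∧ (∀ x, ρ x • (f x + k x • g x) = ρ x • f x + ρb x • g x)
    ∧ (∀ x, LinearMap.trace ℝ (EuclideanSpace ℝ (Fin n))
        (fderiv ℝ (fun z => ρ z • (f z + k z • g z)) x).toLinearMap = h₀ x) := by
  -- `ρb x / 0 = 0` in Lean, so the case split in `hk` is already built into division.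
  have hk_div : ∀ x, k x = ρb x / ρ x := fun x => by
    rw [hk x]
    split_ifs <;> simp_all
  have h_closed : ∀ x, ρ x • (f x + k x • g x) = ρ x • f x + ρb x • g x := fun x => by
    rw [smul_add, smul_smul, hk_div x, mul_div_cancel_of_abs_le_mul (hbound x)]
  refine ⟨fun x => hk_div x ▸ abs_div_le_of_abs_le_mul hM (hbound x), h_closed, fun x => ?_⟩
  rw [funext h_closed]
  exact hdiv x

/-- Convex change of variables `(ρ, k) → (ρ, ρ̄ = kρ)` for control synthesis:
if `ρ ≥ 0`, `|ρ̄| ≤ M ρ`, and `∇·(ρ f + ρ̄ g) = h₀`, then the feedback control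
`k = ρ̄/ρ` (set to `0` where `ρ = 0`) satisfies `|k| ≤ M`, the identity
`ρ (f + k g) = ρ f + ρ̄ g`, and the closed-loop vector field `F = f + k g`
satisfies `∇·(ρ F) = h₀`. -/
theorem control_synthesis_change_of_variables
    (n : ℕ) (hn : 1 ≤ n)
    (f g : EuclideanSpace ℝ (Fin n) → EuclideanSpace ℝ (Fin n))
    (hf : Differentiable ℝ f) (hg : Differentiable ℝ g)
    (ρ ρb : EuclideanSpace ℝ (Fin n) → ℝ)
    (hρdiff : Differentiable ℝ ρ) (hρbdiff : Differentiable ℝ ρb)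
    (h₀ : EuclideanSpace ℝ (Fin n) → ℝ)
    (M : ℝ) (hM : 0 ≤ M)
    (hρpos : ∀ x, 0 ≤ ρ x)
    (hbound : ∀ x, |ρb x| ≤ M * ρ x)
    (hdiv : ∀ x, LinearMap.trace ℝ (EuclideanSpace ℝ (Fin n))
        (fderiv ℝ (fun z => ρ z • f z + ρb z • g z) x).toLinearMap = h₀ x)
    (k : EuclideanSpace ℝ (Fin n) → ℝ)
    (hk : ∀ x, k x = if ρ x ≠ 0 then ρb x / ρ x else 0) :
    (∀ x, |k x| ≤ M)
    ∧ (∀ x, ρ x • (f x + k x • g x) = ρ x • f x + ρb x • g x)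
    ∧ (∀ x, LinearMap.trace ℝ (EuclideanSpace ℝ (Fin n))
        (fderiv ℝ (fun z => ρ z • (f z + k z • g z)) x).toLinearMap = h₀ x) :=
  control_synthesis_change_of_variables_general n f g ρ ρb h₀ M hM hbound hdiv k hk
end
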